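/- arXiv:1907.09895 — 4 statements merged into one kernel-verified Lean document; each statement's English description precedes it below -/
import Mathlib

section
/- There exists ε₀ > 0 such that for every 0 < ε < ε₀ and every y with |y| ≤ 1 + h one has u_ε(x_ε, y) ≤ −2 and u_ε(−x_ε, y) ≤ −2, where x_ε = (3 ε^{−3/2})^{1/(2k)}. -/
/-! At `c = ±x_ε` we have `ε^{3/2} c^{2k} = 3` and `F(c + iy) = -c^{2k} ∏ (1 + c⁻¹(iy - xᵢ))`,
so `ε^{3/2} v(c, y) = -3 Re ∏ (1 + c⁻¹(iy - xᵢ))`, which tends to `-3` uniformly in `|y| ≤ 2` as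
`c → ∞`. The remaining terms are at most `1/2 + O(ε) + O(ε c²)`, and `ε c² = 3^{1/k} ε^{1 - 3/(2k)}`
tends to `0` because `k ≥ 2`. -/

open Set Filter Topology

/-- The holomorphic function `F(z) = -∏ (z - xᵢ)`. -/
noncomputable def FF (k : ℕ) (x : Fin (2*k) → ℝ) (z : ℂ) : ℂ :=
  -∏ i, (z - (x i : ℂ))

/-- `v(x,y) = Re F(x + iy)`, a harmonic function. -/
noncomputable def vv (k : ℕ) (x : Fin (2*k) → ℝ) (p : ℝ × ℝ) : ℝ :=
  (FF k x ((p.1 : ℂ) + (p.2 : ℂ) * Complex.I)).re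

/-- The restriction `f` of `F` to the real line. -/
noncomputable def ff (k : ℕ) (x : Fin (2*k) → ℝ) (t : ℝ) : ℝ :=
  (FF k x (t : ℂ)).re

/-- `u_ε(x,y) = 1/2 - y²/2 + ε (y³ - 3 x² y) + ε^{3/2} v(x,y)`. -/
noncomputable def uu (k : ℕ) (x : Fin (2*k) → ℝ) (ε : ℝ) (p : ℝ × ℝ) : ℝ :=
  1/2 - p.2^2/2 + ε * (p.2^3 - 3*p.1^2*p.2) + ε ^ ((3:ℝ)/2) * vv k x p

/-- `x_ε = (3 ε^{-3/2})^{1/(2k)}`. -/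
noncomputable def xeps (k : ℕ) (ε : ℝ) : ℝ :=
  (3 * ε ^ (-(3:ℝ)/2)) ^ ((1:ℝ)/(2*k))

/-- `Ω_ε`: the connected component of `{u_ε > 0}` containing `(x₁, 0)`. -/
noncomputable def Omeg (k : ℕ) (hk : 2 ≤ k) (x : Fin (2*k) → ℝ) (ε : ℝ) : Set (ℝ × ℝ) :=
  connectedComponentIn {p : ℝ × ℝ | 0 < uu k x ε p} (x ⟨0, by omega⟩, 0)

/-- partial derivative in the first variable. -/
noncomputable def px (g : ℝ × ℝ → ℝ) (p : ℝ × ℝ) : ℝ :=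
  deriv (fun t => g (t, p.2)) p.1

/-- partial derivative in the second variable. -/
noncomputable def py (g : ℝ × ℝ → ℝ) (p : ℝ × ℝ) : ℝ :=
  deriv (fun t => g (p.1, t)) p.2

/-- `N_u = u_xx u_y² - 2 u_xy u_x u_y + u_yy u_x²`. -/
noncomputable def NN (g : ℝ × ℝ → ℝ) (p : ℝ × ℝ) : ℝ :=
  px (px g) p * (py g p)^2 - 2 * py (px g) p * px g p * py g p + py (py g) p * (px g p)^2

/-- Oriented curvature of a level curve of `g`. -/
noncomputable def CurvU (g : ℝ × ℝ → ℝ) (p : ℝ × ℝ) : ℝ :=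
  -(NN g p) / ((px g p)^2 + (py g p)^2) ^ ((3:ℝ)/2)


open Complex in
noncomputable def rescaledProd {ι : Type*} [Fintype ι] (x : ι → ℝ) (t y : ℝ) : ℂ :=
  ∏ i, (1 + t * (y * I - x i))

theorem prod_add_eq_pow_mul_prod {ι : Type*} [Fintype ι] {c : ℂ} (hc : c ≠ 0) (w : ι → ℂ) :
    ∏ i, (c + w i) = c ^ Fintype.card ι * ∏ i, (1 + c⁻¹ * w i) := by
  rw [← Finset.card_univ, ← Finset.prod_const, ← Finset.prod_mul_distrib]
  refine Finset.prod_congr rfl fun i _ => ?_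
  field_simp

theorem vv_eq_neg_pow_mul_re_rescaledProd (k : ℕ) (x : Fin (2 * k) → ℝ) {c : ℝ} (hc : c ≠ 0)
    (y : ℝ) : vv k x (c, y) = -(c ^ (2 * k) * (rescaledProd x c⁻¹ y).re) := by
  have h := prod_add_eq_pow_mul_prod (Complex.ofReal_ne_zero.mpr hc)
    (fun i => (y : ℂ) * Complex.I - x i)
  simp only [Fintype.card_fin] at h
  simp only [vv, FF, rescaledProd, Complex.neg_re, Complex.ofReal_inv, add_sub_assoc, h,
    ← Complex.ofReal_pow, Complex.re_ofReal_mul]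

theorem eventually_forall_lt_re_rescaledProd {ι : Type*} [Fintype ι] (x : ι → ℝ) {K : Set ℝ}
    (hK : IsCompact K) {r : ℝ} (hr : r < 1) :
    ∀ᶠ t in 𝓝 0, ∀ y ∈ K, r < (rescaledProd x t y).re := by
  refine hK.eventually_forall_of_forall_eventually fun y _ => ?_
  have hcont : Continuous fun p : ℝ × ℝ => (rescaledProd x p.1 p.2).re := by
    unfold rescaledProd; fun_prop
  refine hcont.continuousAt.eventually (lt_mem_nhds ?_)
  simpa [rescaledProd] using hr

theorem rpow_mul_xeps_pow {k : ℕ} (hk : k ≠ 0) {ε : ℝ} (hε : 0 < ε) :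
    ε ^ ((3:ℝ)/2) * xeps k ε ^ (2 * k) = 3 := by
  have ha : 0 ≤ 3 * ε ^ (-(3:ℝ)/2) := by positivity
  rw [xeps, ← Real.rpow_natCast, ← Real.rpow_mul ha,
    show (1:ℝ) / (2 * k) * ((2 * k : ℕ) : ℝ) = 1 by push_cast; field_simp, Real.rpow_one,
    mul_left_comm, ← Real.rpow_add hε]
  norm_num

theorem tendsto_xeps_atTop {k : ℕ} (hk : k ≠ 0) : Tendsto (xeps k) (𝓝[>] 0) atTop :=
  (tendsto_rpow_atTop (by have := Nat.pos_of_ne_zero hk; positivity)).comp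
    ((tendsto_rpow_neg_nhdsGT_zero (by norm_num)).const_mul_atTop (by norm_num))

theorem tendsto_mul_xeps_sq {k : ℕ} (hk : 2 ≤ k) :
    Tendsto (fun ε => ε * xeps k ε ^ 2) (𝓝[>] 0) (𝓝 0) := by
  have hk0 : (0:ℝ) < k := by positivity
  have hexp : 0 < 1 - 3 / (2 * (k:ℝ)) := by
    rw [sub_pos, div_lt_one (by positivity)]; norm_cast; omega
  have heq : ∀ ε ∈ Ioi (0:ℝ),
      (3:ℝ) ^ (1 / (k:ℝ)) * ε ^ (1 - 3 / (2 * (k:ℝ))) = ε * xeps k ε ^ 2 := by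
    intro ε (hε : 0 < ε)
    rw [xeps, ← Real.rpow_natCast, ← Real.rpow_mul (by positivity), Real.mul_rpow (by norm_num)
      (by positivity), ← Real.rpow_mul hε.le, Real.rpow_sub hε, Real.rpow_one,
      show (1:ℝ) / (2 * k) * ((2:ℕ):ℝ) = 1 / k by push_cast; field_simp,
      show (-3:ℝ) / 2 * (1 / k) = -(3 / (2 * k)) by ring, Real.rpow_neg hε.le]
    ring
  have hcont : ContinuousAt (fun ε : ℝ => (3:ℝ) ^ (1 / (k:ℝ)) * ε ^ (1 - 3 / (2 * (k:ℝ)))) 0 :=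
    (Real.continuousAt_rpow_const 0 _ (Or.inr hexp.le)).const_mul _
  have hlim := hcont.tendsto.mono_left (nhdsWithin_le_nhds (s := Ioi 0))
  simp only [Real.zero_rpow hexp.ne', mul_zero] at hlim
  exact hlim.congr' (eventually_nhdsWithin_of_forall heq)

theorem uu_le_neg_two (k : ℕ) (x : Fin (2 * k) → ℝ) {ε c y : ℝ} (hε : 0 < ε) (hε1 : ε ≤ 1 / 100)
    (hc : c ≠ 0) (hscale : ε ^ ((3:ℝ)/2) * c ^ (2 * k) = 3) (hεc : ε * c ^ 2 ≤ 1 / 50)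
    (hy : |y| ≤ 2) (hprod : 9 / 10 ≤ (rescaledProd x c⁻¹ y).re) :
    uu k x ε (c, y) ≤ -2 := by
  obtain ⟨hy₁, hy₂⟩ := abs_le.mp hy
  have hcubic : ε * y ^ 3 ≤ ε * 8 := mul_le_mul_of_nonneg_left
    (by nlinarith [mul_nonneg (sub_nonneg.2 hy₂) (sq_nonneg (y + 1))]) hε.le
  have hcross : ε * c ^ 2 * -y ≤ ε * c ^ 2 * 2 :=
    mul_le_mul_of_nonneg_left (by linarith) (by positivity)
  have hmain : ε ^ ((3:ℝ)/2) * vv k x (c, y) = -3 * (rescaledProd x c⁻¹ y).re := by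
    rw [vv_eq_neg_pow_mul_re_rescaledProd k x hc]
    linear_combination (-(rescaledProd x c⁻¹ y).re) * hscale
  simp only [uu]
  nlinarith [sq_nonneg y]

theorem stmt2_general (k : ℕ) (hk : 2 ≤ k) (x : Fin (2*k) → ℝ)
    (h : ℝ) (hh : h ∈ Set.Ioo (0:ℝ) 1) :
    ∃ ε₀ > (0:ℝ), ∀ ε : ℝ, 0 < ε → ε < ε₀ → ∀ y : ℝ, |y| ≤ 1 + h →
      uu k x ε (xeps k ε, y) ≤ -2 ∧ uu k x ε (-xeps k ε, y) ≤ -2 := by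
  have hk0 : k ≠ 0 := by omega
  have hinv : Tendsto (fun ε => (xeps k ε)⁻¹) (𝓝[>] 0) (𝓝 0) :=
    tendsto_inv_atTop_zero.comp (tendsto_xeps_atTop hk0)
  have hinv_neg : Tendsto (fun ε => (-xeps k ε)⁻¹) (𝓝[>] 0) (𝓝 0) := by
    simpa only [inv_neg, neg_zero] using hinv.neg
  have hprod := eventually_forall_lt_re_rescaledProd x (isCompact_Icc (a := -2) (b := 2))
    (by norm_num : (9:ℝ) / 10 < 1)
  have hev : ∀ᶠ ε in 𝓝[>] 0, ε ∈ Ioc 0 (1 / 100) ∧ ε * xeps k ε ^ 2 ≤ 1 / 50 ∧ 0 < xeps k ε ∧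
      (∀ y ∈ Icc (-2) 2, 9 / 10 < (rescaledProd x (xeps k ε)⁻¹ y).re) ∧
      (∀ y ∈ Icc (-2) 2, 9 / 10 < (rescaledProd x (-xeps k ε)⁻¹ y).re) :=
    Eventually.and (Ioc_mem_nhdsGT (by norm_num : (0:ℝ) < 1 / 100)) <|
      ((tendsto_mul_xeps_sq hk).eventually (ge_mem_nhds (by norm_num))).and <|
      ((tendsto_xeps_atTop hk0).eventually_gt_atTop 0).and <|
      (hinv.eventually hprod).and (hinv_neg.eventually hprod)
  obtain ⟨ε₀, hε₀, hsmall⟩ := (nhdsGT_basis 0).eventually_iff.mp hev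
  refine ⟨ε₀, hε₀, fun ε hε hεε₀ y hy => ?_⟩
  obtain ⟨⟨-, hε1⟩, hεx, hx0, hpos, hneg⟩ := hsmall ⟨hε, hεε₀⟩
  have hy2 : |y| ≤ 2 := by linarith [hh.2]
  have hyK : y ∈ Icc (-2) 2 := abs_le.mp hy2
  have hscale := rpow_mul_xeps_pow hk0 hε
  refine ⟨uu_le_neg_two k x hε hε1 hx0.ne' hscale hεx hy2 (hpos y hyK).le,
    uu_le_neg_two k x hε hε1 (neg_ne_zero.mpr hx0.ne') ?_ ?_ hy2 (hneg y hyK).le⟩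
  · rwa [(even_two_mul k).neg_pow]
  · rwa [neg_sq]

theorem stmt2 (k : ℕ) (hk : 2 ≤ k) (x : Fin (2*k) → ℝ) (hx : StrictMono x)
    (h : ℝ) (hh : h ∈ Set.Ioo (0:ℝ) 1) :
    ∃ ε₀ > (0:ℝ), ∀ ε : ℝ, 0 < ε → ε < ε₀ → ∀ y : ℝ, |y| ≤ 1 + h →
      uu k x ε (xeps k ε, y) ≤ -2 ∧ uu k x ε (-xeps k ε, y) ≤ -2 :=
  stmt2_general k hk x h hh
end

section
/- Let s ∈ ℝ be any point with f(s) < 0. Then there exists ε₀ > 0 such that for every 0 < ε < ε₀ and every y ∈ [−(1+h), 1+h] one has u_ε(s, y) < 1/2. -/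
open Set Filter Topology

/-!
Write `u_ε(s, y) - 1/2 = -y²/2 + ε g(y) + ε^{3/2} v(s, y)` with `g(y) = y³ - 3s²y = O(|y|)`.
Away from `y = 0` the dip `-y²/2` dominates the `O(ε)` perturbation. Near `y = 0` it cannot
beat `ε g` alone, but `ε C |y| - y²/2 ≤ ε² C²/2 = o(ε^{3/2})`, so the term `ε^{3/2} v(s, y)`,
close to `ε^{3/2} f(s) < 0` there, wins.
-/

lemma rpow_three_halves {ε : ℝ} (hε : 0 ≤ ε) : ε ^ ((3:ℝ)/2) = ε * √ε := by
  rw [show (3:ℝ)/2 = 1 + 1/2 by norm_num, Real.rpow_add' hε (by norm_num), Real.rpow_one,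
    Real.sqrt_eq_rpow]

lemma neg_sq_half_add_mul_abs_le (a y : ℝ) : -y^2/2 + a * |y| ≤ a^2/2 := by
  nlinarith [sq_nonneg (|y| - a), sq_abs y]

lemma cubic_le_mul_abs (s : ℝ) {y R : ℝ} (hy : |y| ≤ R) :
    y^3 - 3*s^2*y ≤ (R^2 + 3*s^2) * |y| := by
  have hy2 : y^2 ≤ R^2 := by nlinarith [sq_abs y, abs_nonneg y]
  have hcube : y^3 ≤ R^2 * |y| := by
    calc y^3 = y^2 * y := by ring
      _ ≤ y^2 * |y| := mul_le_mul_of_nonneg_left (le_abs_self y) (sq_nonneg y)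
      _ ≤ R^2 * |y| := mul_le_mul_of_nonneg_right hy2 (abs_nonneg y)
  nlinarith [neg_abs_le y, sq_nonneg s]

section Perturbation

variable {g v : ℝ → ℝ} {S : Set ℝ}

lemma eventually_perturbation_neg_of_le_neg {C a : ℝ} (ha : 0 < a)
    (hg : ∀ y ∈ S, g y ≤ C * |y|) (hv : ∀ y ∈ S, v y ≤ -a) :
    ∀ᶠ ε in 𝓝[>] 0, ∀ y ∈ S, -y^2/2 + ε * g y + ε ^ ((3:ℝ)/2) * v y < 0 := by
  have hsqrt : Tendsto (fun ε : ℝ => √ε * C^2) (𝓝[>] 0) (𝓝 0) :=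
    ((Real.continuous_sqrt.mul continuous_const).tendsto' 0 0 (by simp)).mono_left
      nhdsWithin_le_nhds
  filter_upwards [self_mem_nhdsWithin, hsqrt.eventually_lt_const ha] with ε hε hsmall y hy
  have hε : 0 < ε := hε
  have hr : 0 < √ε := Real.sqrt_pos.mpr hε
  have hεε : ε * ε = ε * √ε * √ε := by rw [mul_assoc, Real.mul_self_sqrt hε.le]
  have hεg : ε * g y ≤ (ε * C) * |y| := by
    rw [mul_assoc]; exact mul_le_mul_of_nonneg_left (hg y hy) hε.le
  have hεv : ε * √ε * v y ≤ ε * √ε * (-a) := mul_le_mul_of_nonneg_left (hv y hy) (by positivity)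
  rw [rpow_three_halves hε.le]
  calc -y^2/2 + ε * g y + ε * √ε * v y
      ≤ -y^2/2 + (ε * C) * |y| + ε * √ε * (-a) := by linarith
    _ ≤ (ε * C)^2/2 - ε * √ε * a := by linarith [neg_sq_half_add_mul_abs_le (ε * C) y]
    _ = ε * √ε * (√ε * C^2 / 2 - a) := by linear_combination (C^2/2) * hεε
    _ < 0 := mul_neg_of_pos_of_neg (mul_pos hε hr) (by nlinarith [sq_nonneg C])

lemma eventually_perturbation_neg_of_le_abs {B M δ : ℝ} (hδ : 0 < δ)
    (hg : ∀ y ∈ S, g y ≤ B) (hv : ∀ y ∈ S, v y ≤ M) (hy : ∀ y ∈ S, δ ≤ |y|) :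
    ∀ᶠ ε in 𝓝[>] 0, ∀ y ∈ S, -y^2/2 + ε * g y + ε ^ ((3:ℝ)/2) * v y < 0 := by
  have hsmall : Tendsto (fun ε : ℝ => ε * B + ε * √ε * M) (𝓝[>] 0) (𝓝 0) :=
    ((by fun_prop : Continuous fun ε : ℝ => ε * B + ε * √ε * M).tendsto' 0 0
      (by simp)).mono_left nhdsWithin_le_nhds
  filter_upwards [self_mem_nhdsWithin, hsmall.eventually_lt_const (by positivity : 0 < δ^2/2)]
    with ε hε hlt y hyS
  have hε : 0 < ε := hε
  have hδy : δ^2 ≤ y^2 := by nlinarith [sq_abs y, hy y hyS]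
  rw [rpow_three_halves hε.le]
  have hεg : ε * g y ≤ ε * B := mul_le_mul_of_nonneg_left (hg y hyS) hε.le
  have hεv : ε * √ε * v y ≤ ε * √ε * M := mul_le_mul_of_nonneg_left (hv y hyS) (by positivity)
  linarith

theorem eventually_perturbation_neg (hv : Continuous v) (hv0 : v 0 < 0) {C R : ℝ}
    (hg : ∀ y ∈ Icc (-R) R, g y ≤ C * |y|) :
    ∀ᶠ ε in 𝓝[>] 0, ∀ y ∈ Icc (-R) R, -y^2/2 + ε * g y + ε ^ ((3:ℝ)/2) * v y < 0 := by
  obtain ⟨δ, hδ, hvδ⟩ := Metric.eventually_nhds_iff.mp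
    (hv.continuousAt.eventually_lt continuousAt_const (by linarith) :
      ∀ᶠ y in 𝓝 (0:ℝ), v y < v 0 / 2)
  obtain ⟨M, hM⟩ := (isCompact_Icc (a := -R) (b := R)).bddAbove_image hv.continuousOn
  have hnear := eventually_perturbation_neg_of_le_neg (v := v) (S := {y ∈ Icc (-R) R | |y| < δ})
    (a := -(v 0 / 2)) (by linarith) (fun y hy => hg y hy.1)
    (fun y hy => by
      have := hvδ (show dist y 0 < δ by simpa [Real.dist_eq] using hy.2)
      linarith)
  have hfar := eventually_perturbation_neg_of_le_abs (v := v) (S := {y ∈ Icc (-R) R | δ ≤ |y|})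
    (B := |C| * R) (M := M) hδ
    (fun y hy => (hg y hy.1).trans
      (mul_le_mul (le_abs_self C) (abs_le.mpr hy.1) (abs_nonneg y) (abs_nonneg C)))
    (fun y hy => hM (mem_image_of_mem v hy.1)) (fun y hy => hy.2)
  filter_upwards [hnear, hfar] with ε hnear hfar y hy
  rcases lt_or_ge |y| δ with hyδ | hyδ
  · exact hnear y ⟨hy, hyδ⟩
  · exact hfar y ⟨hy, hyδ⟩

end Perturbation

lemma continuous_vv_slice (k : ℕ) (x : Fin (2*k) → ℝ) (s : ℝ) :
    Continuous fun y => vv k x (s, y) := by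
  unfold vv FF
  fun_prop

lemma vv_slice_zero (k : ℕ) (x : Fin (2*k) → ℝ) (s : ℝ) : vv k x (s, 0) = ff k x s := by
  simp [vv, ff]

theorem stmt9_general (k : ℕ) (x : Fin (2*k) → ℝ)
    (h : ℝ)
    (s : ℝ) (hs : ff k x s < 0) :
    ∃ ε₀ > (0:ℝ), ∀ ε : ℝ, 0 < ε → ε < ε₀ →
      ∀ y ∈ Set.Icc (-(1+h)) (1+h), uu k x ε (s, y) < 1/2 := by
  have hneg := eventually_perturbation_neg (g := fun y => y^3 - 3*s^2*y) (R := 1 + h)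
    (continuous_vv_slice k x s) (by rwa [vv_slice_zero])
    (fun y hy => cubic_le_mul_abs s (abs_le.mpr hy))
  obtain ⟨ε₀, hε₀, hε₀neg⟩ := (nhdsGT_basis (0:ℝ)).eventually_iff.mp hneg
  refine ⟨ε₀, hε₀, fun ε hε hεε₀ y hy => ?_⟩
  have := hε₀neg ⟨hε, hεε₀⟩ y hy
  simp only [uu]
  linarith

theorem stmt9 (k : ℕ) (hk : 2 ≤ k) (x : Fin (2*k) → ℝ) (hx : StrictMono x)
    (h : ℝ) (hh : h ∈ Set.Ioo (0:ℝ) 1)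
    (s : ℝ) (hs : ff k x s < 0) :
    ∃ ε₀ > (0:ℝ), ∀ ε : ℝ, 0 < ε → ε < ε₀ →
      ∀ y ∈ Set.Icc (-(1+h)) (1+h), uu k x ε (s, y) < 1/2 :=
  stmt9_general k x h s hs
end

section
/- For each j = 1,…,k choose a point s̄_j ∈ (x_{2j−1}, x_{2j}) with f(s̄_j) > 0. There exists ε₀ > 0 such that for every 0 < ε < ε₀: each point (s̄_j, 0) belongs to Ω_ε, u_ε(s̄_j, 0) > 1/2, and for j ≠ j′ the points (s̄_j, 0) and (s̄_{j′}, 0) lie in distinct connected components of the open set {(x,y) ∈ ℝ² : u_ε(x,y) > 1/2}. In particular {u_ε > 1/2} has at least k connected components meeting Ω_ε. -/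
/-!
With `η = √ε` one has `u_ε = 1/2 - y²/2 + η² (y³ - 3x²y) + η³ v`, and on the axis
`u_ε(t, 0) = 1/2 + ε^{3/2} f(t)`. Hence for small `ε` the segment of the axis spanning all the
`x_i` lies in `{u_ε > 0}`, and `u_ε(s̄_j, 0) > 1/2`.

Pick `m_0 < x_1`, `m_j ∈ (x_{2j}, x_{2j+1})` for `0 < j < k`, `m_k > x_{2k}`. Grouping the
factors of `F` in consecutive pairs shows `f(m_j) < 0`. On the rectangle
`(m_{j-1}, m_j) × (-δ, δ)` the function `u_ε` stays `≤ 1/2` on the boundary once `δ`, then `ε`,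
are small: on the horizontal sides `u_ε → 1/2 - δ²/2` uniformly, and on the vertical sides AM-GM
absorbs the cubic term into `y²/2` up to `O(η⁴)`, which loses against `η³ v ≤ η³ f(m_j)/2`. So
the component of `{u_ε > 1/2}` through `(s̄_j, 0)` is trapped in the `j`-th rectangle, and these
rectangles are disjoint.
-/

open Set Filter Topology

theorem Fin.prod_univ_two_mul {M : Type*} [CommMonoid M] (k : ℕ) (g : Fin (2 * k) → M) :
    ∏ i, g i = ∏ a : Fin k, g ⟨2 * a, by omega⟩ * g ⟨2 * a + 1, by omega⟩ := by
  rw [← (finProdFinEquiv.trans (finCongr (mul_comm k 2))).prod_comp, Fintype.prod_prod_type]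
  refine Finset.prod_congr rfl fun a _ => ?_
  rw [Fin.prod_univ_two]
  congr 2 <;> simp [finProdFinEquiv, mul_comm, add_comm]

lemma ff_eq_prod_pairs (k : ℕ) (x : Fin (2 * k) → ℝ) (t : ℝ) :
    ff k x t = -∏ a : Fin k, (t - x ⟨2 * a, by omega⟩) * (t - x ⟨2 * a + 1, by omega⟩) := by
  rw [ff, FF, Fin.prod_univ_two_mul]
  simp only [← Complex.ofReal_sub, ← Complex.ofReal_mul, ← Complex.ofReal_prod,
    ← Complex.ofReal_neg, Complex.ofReal_re]

lemma ff_neg_of_separates_even {k : ℕ} {x : Fin (2 * k) → ℝ} {t : ℝ} {n : ℕ}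
    (hlt : ∀ l : Fin (2 * k), (l : ℕ) < 2 * n → x l < t)
    (hgt : ∀ l : Fin (2 * k), 2 * n ≤ l → t < x l) : ff k x t < 0 := by
  rw [ff_eq_prod_pairs, neg_lt_zero]
  refine Finset.prod_pos fun a _ => ?_
  by_cases ha : (a : ℕ) < n
  · exact mul_pos (sub_pos.2 (hlt _ (by simp; omega))) (sub_pos.2 (hlt _ (by simp; omega)))
  · exact mul_pos_of_neg_of_neg (sub_neg.2 (hgt _ (by simp; omega)))
      (sub_neg.2 (hgt _ (by simp; omega)))

lemma StrictMono.exists_separating_prefix {N : ℕ} {x : Fin N → ℝ} (hx : StrictMono x) (n : ℕ) :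
    ∃ t, (∀ l : Fin N, (l : ℕ) < n → x l < t) ∧ (∀ l : Fin N, n ≤ l → t < x l) := by
  obtain ⟨t, hlow, hhigh⟩ := Set.Finite.exists_between' (Set.toFinite (x '' {l | (l : ℕ) < n}))
    (Set.toFinite (x '' {l | n ≤ (l : ℕ)}))
    (by rintro _ ⟨l, hl, rfl⟩ _ ⟨l', hl', rfl⟩; exact hx (Fin.lt_def.2 (by simp_all; omega)))
  exact ⟨t, fun l hl => hlow _ ⟨l, hl, rfl⟩, fun l hl => hhigh _ ⟨l, hl, rfl⟩⟩

lemma exists_gap_points {k : ℕ} {x : Fin (2 * k) → ℝ} (hx : StrictMono x) :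
    ∃ m : Fin (k + 1) → ℝ, StrictMono m ∧ (∀ i, ff k x (m i) < 0) ∧
      (∀ l, m 0 < x l ∧ x l < m (Fin.last k)) ∧
      ∀ j : Fin k, m j.castSucc < x ⟨2 * j, by omega⟩ ∧ x ⟨2 * j + 1, by omega⟩ < m j.succ := by
  choose m hm_lt hm_gt using fun i : Fin (k + 1) => hx.exists_separating_prefix (2 * i)
  refine ⟨m, fun i i' hii' => ?_, fun i => ff_neg_of_separates_even (hm_lt i) (hm_gt i),
    fun l => ⟨hm_gt 0 l (by simp), hm_lt _ l (by simp)⟩,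
    fun j => ⟨hm_gt _ _ (by simp), hm_lt _ _ (by simp; omega)⟩⟩
  have hi : 2 * (i : ℕ) < 2 * k := by have := Fin.lt_def.1 hii'; omega
  exact (hm_gt i ⟨_, hi⟩ le_rfl).trans (hm_lt i' ⟨_, hi⟩ (by simp [Fin.lt_def.1 hii']))

theorem IsCompact.eventually_forall_mapsTo {X Y Z : Type*} [TopologicalSpace X]
    [TopologicalSpace Y] [TopologicalSpace Z] {f : X → Y → Z} (hf : Continuous (Function.uncurry f))
    {K : Set Y} (hK : IsCompact K) {U : Set Z} (hU : IsOpen U) {x₀ : X}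
    (h : ∀ y ∈ K, f x₀ y ∈ U) : ∀ᶠ x in 𝓝 x₀, ∀ y ∈ K, f x y ∈ U :=
  hK.eventually_forall_of_forall_eventually fun y hy =>
    hf.continuousAt.eventually_mem (hU.mem_nhds (h y hy))

lemma continuous_vv (k : ℕ) (x : Fin (2 * k) → ℝ) : Continuous (vv k x) := by
  unfold vv FF
  fun_prop

lemma continuous_uu_uncurry (k : ℕ) (x : Fin (2 * k) → ℝ) :
    Continuous (Function.uncurry (uu k x)) := by
  have hv : Continuous fun q : ℝ × (ℝ × ℝ) => vv k x q.2 := (continuous_vv k x).comp continuous_snd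
  have hr : Continuous fun q : ℝ × (ℝ × ℝ) => q.1 ^ ((3:ℝ) / 2) :=
    (Real.continuous_rpow_const (by norm_num)).comp continuous_fst
  unfold uu Function.uncurry
  fun_prop

lemma vv_axis (k : ℕ) (x : Fin (2 * k) → ℝ) (t : ℝ) : vv k x (t, 0) = ff k x t := by
  simp [vv, ff]

lemma uu_zero (k : ℕ) (x : Fin (2 * k) → ℝ) (p : ℝ × ℝ) : uu k x 0 p = 1/2 - p.2^2/2 := by
  simp [uu]

lemma uu_axis (k : ℕ) (x : Fin (2 * k) → ℝ) (ε t : ℝ) :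
    uu k x ε (t, 0) = 1/2 + ε ^ ((3:ℝ)/2) * ff k x t := by
  simp [uu, vv_axis]

lemma uu_eq_sqrt {k : ℕ} {x : Fin (2 * k) → ℝ} {ε : ℝ} (hε : 0 ≤ ε) (p : ℝ × ℝ) :
    uu k x ε p = 1/2 - p.2^2/2 + √ε^2 * (p.2^3 - 3*p.1^2*p.2) + √ε^3 * vv k x p := by
  rw [uu, Real.sq_sqrt hε, Real.sqrt_eq_rpow, ← Real.rpow_natCast (ε ^ (1/2 : ℝ)) 3,
    ← Real.rpow_mul hε]
  norm_num

lemma cubic_perturbation_le_half {η y a v c : ℝ} (hη : 0 ≤ η) (hy : |y| ≤ 1) (hv : v ≤ -c)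
    (hsmall : η * (1 + 3 * a^2)^2 ≤ 2 * c) :
    1/2 - y^2/2 + η^2 * (y^3 - 3*a^2*y) + η^3 * v ≤ 1/2 := by
  set C := 1 + 3 * a^2
  have hcubic : y^3 - 3*a^2*y ≤ C * |y| := by
    have h1 : |y^2 - 3*a^2| ≤ C := abs_le.2 ⟨by nlinarith [sq_nonneg a, sq_nonneg y],
      by nlinarith [sq_abs y, abs_nonneg y]⟩
    calc y^3 - 3*a^2*y = y * (y^2 - 3*a^2) := by ring
      _ ≤ |y| * |y^2 - 3*a^2| := by rw [← abs_mul]; exact le_abs_self _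
      _ ≤ C * |y| := by nlinarith [abs_nonneg y]
  -- AM-GM absorbs the cubic term into `y²/2`, leaving `η⁴C²/2 ≤ η³c`
  have hamgm : η^2 * (C * |y|) ≤ y^2/2 + η^3 * (η * C^2) / 2 := by
    nlinarith [sq_nonneg (|y| - η^2 * C), sq_abs y]
  have hη3 : 0 ≤ η^3 := pow_nonneg hη 3
  nlinarith [mul_le_mul_of_nonneg_left hcubic (sq_nonneg η), mul_le_mul_of_nonneg_left hv hη3,
    mul_le_mul_of_nonneg_left hsmall hη3]

lemma eventually_uu_pos_on_axis (k : ℕ) (x : Fin (2 * k) → ℝ) (A B : ℝ) :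
    ∀ᶠ ε in 𝓝 0, ∀ t ∈ Icc A B, 0 < uu k x ε (t, 0) := by
  have hK : IsCompact (Icc A B ×ˢ {(0 : ℝ)}) := isCompact_Icc.prod isCompact_singleton
  filter_upwards [hK.eventually_forall_mapsTo (continuous_uu_uncurry k x) (isOpen_Ioi (a := 0))
    (by rintro ⟨t, _⟩ ⟨-, rfl⟩; norm_num [uu_zero])] with ε hε t ht
  exact hε (t, 0) ⟨ht, rfl⟩

lemma eventually_uu_lt_half_on_horizontal (k : ℕ) (x : Fin (2 * k) → ℝ) (A B : ℝ) {δ : ℝ}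
    (hδ : δ ≠ 0) :
    ∀ᶠ ε in 𝓝 0, ∀ t ∈ Icc A B, ∀ y ∈ ({-δ, δ} : Set ℝ), uu k x ε (t, y) < 1/2 := by
  have hK : IsCompact (Icc A B ×ˢ ({-δ, δ} : Set ℝ)) :=
    isCompact_Icc.prod (Set.toFinite _).isCompact
  filter_upwards [hK.eventually_forall_mapsTo (continuous_uu_uncurry k x) (isOpen_Iio (a := 1/2))
    (by rintro ⟨t, y⟩ ⟨-, hy⟩
        have hy2 : y^2 = δ^2 := by rcases hy with rfl | rfl <;> ring
        simp only [mem_Iio, uu_zero, hy2]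
        linarith [pow_two_pos_of_ne_zero hδ])] with ε hε t ht y hy
  exact hε (t, y) ⟨ht, hy⟩

lemma eventually_uu_le_half_on_vertical {k : ℕ} {x : Fin (2 * k) → ℝ} {a : ℝ}
    (ha : ff k x a < 0) :
    ∀ᶠ δ in 𝓝[>] 0, ∀ᶠ ε in 𝓝[>] 0, ∀ y ∈ Icc (-δ) δ, uu k x ε (a, y) ≤ 1/2 := by
  set c := -ff k x a / 2
  have hnear : ∀ᶠ y in 𝓝 0, vv k x (a, y) < -c ∧ y ∈ Icc (-1) 1 := by
    refine ((continuous_vv k x).comp (Continuous.prodMk_right a)).continuousAt.eventually_lt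
      continuousAt_const ?_ |>.and (Icc_mem_nhds (by norm_num) (by norm_num))
    simp only [Function.comp_apply, vv_axis, c]
    linarith
  have hsmall : ∀ᶠ ε in 𝓝 0, √ε * (1 + 3 * a^2)^2 < 2 * c := by
    have hcont : Continuous fun ε : ℝ => √ε * (1 + 3 * a^2)^2 := by fun_prop
    refine hcont.continuousAt.eventually_lt continuousAt_const ?_
    simp only [Real.sqrt_zero, zero_mul, c]
    linarith
  filter_upwards [nhdsWithin_le_nhds (eventually_closedBall_subset hnear)] with δ hδ
  filter_upwards [nhdsWithin_le_nhds hsmall, self_mem_nhdsWithin] with ε hε hεpos y hy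
  obtain ⟨hv, hy1⟩ := hδ (by rwa [Real.closedBall_eq_Icc, zero_sub, zero_add])
  rw [uu_eq_sqrt hεpos.le]
  exact cubic_perturbation_le_half (Real.sqrt_nonneg ε) (abs_le.2 hy1) hv.le hε.le

theorem connectedComponentIn_subset_of_disjoint_frontier {X : Type*} [TopologicalSpace X]
    {U B : Set X} (hB : IsOpen B) (hUB : Disjoint U (frontier B)) {p : X} (hpU : p ∈ U)
    (hpB : p ∈ B) : connectedComponentIn U p ⊆ B :=
  isPreconnected_connectedComponentIn.subset_of_closure_inter_subset hB
    ⟨p, mem_connectedComponentIn hpU, hpB⟩ fun _ ⟨hqc, hq⟩ => by_contra fun hqB =>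
      hUB.notMem_of_mem_left (connectedComponentIn_subset U p hq) (hB.frontier_eq ▸ ⟨hqc, hqB⟩)

lemma connectedComponentIn_subset_rectangle {g : ℝ × ℝ → ℝ} {L a b c d : ℝ}
    (hvert : ∀ t ∈ ({a, b} : Set ℝ), ∀ y ∈ Icc c d, g (t, y) ≤ L)
    (hhor : ∀ t ∈ Icc a b, ∀ y ∈ ({c, d} : Set ℝ), g (t, y) ≤ L)
    {p : ℝ × ℝ} (hp : p ∈ Ioo a b ×ˢ Ioo c d) (hpL : L < g p) :
    connectedComponentIn {q | L < g q} p ⊆ Ioo a b ×ˢ Ioo c d := by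
  have hab : a < b := hp.1.1.trans hp.1.2
  have hcd : c < d := hp.2.1.trans hp.2.2
  refine connectedComponentIn_subset_of_disjoint_frontier (isOpen_Ioo.prod isOpen_Ioo) ?_ hpL hp
  rw [frontier_prod_eq, closure_Ioo hab.ne, closure_Ioo hcd.ne, frontier_Ioo hab,
    frontier_Ioo hcd]
  refine disjoint_left.2 ?_
  rintro ⟨t, y⟩ hq (⟨ht, hy⟩ | ⟨ht, hy⟩)
  · exact (hhor t ht y hy).not_gt hq
  · exact (hvert t ht y hy).not_gt hq

lemma half_lt_uu_axis {k : ℕ} {x : Fin (2 * k) → ℝ} {ε t : ℝ} (hε : 0 < ε) (ht : 0 < ff k x t) :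
    1/2 < uu k x ε (t, 0) := by
  rw [uu_axis]
  linarith [mul_pos (Real.rpow_pos_of_pos hε ((3:ℝ)/2)) ht]

lemma mem_Omeg_of_pos_on_segment {k : ℕ} (hk : 2 ≤ k) {x : Fin (2 * k) → ℝ} {ε A B t : ℝ}
    (hpos : ∀ t ∈ Icc A B, 0 < uu k x ε (t, 0)) (hx₀ : x ⟨0, by omega⟩ ∈ Icc A B)
    (ht : t ∈ Icc A B) : (t, 0) ∈ Omeg k hk x ε := by
  refine (isPreconnected_Icc.prod isPreconnected_singleton).subset_connectedComponentIn
    (x := (x ⟨0, by omega⟩, 0)) ⟨hx₀, mem_singleton 0⟩ ?_ ⟨ht, mem_singleton 0⟩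
  rintro ⟨t, _⟩ ⟨ht, rfl⟩
  exact hpos t ht

lemma StrictMono.eq_of_mem_Ioo_castSucc_succ {α : Type*} [Preorder α] {k : ℕ}
    {m : Fin (k + 1) → α} (hm : StrictMono m) {j j' : Fin k} {a : α}
    (h : a ∈ Ioo (m j.castSucc) (m j.succ)) (h' : a ∈ Ioo (m j'.castSucc) (m j'.succ)) :
    j = j' :=
  le_antisymm (Fin.castSucc_lt_succ_iff.1 (hm.lt_iff_lt.1 (h.1.trans h'.2)))
    (Fin.castSucc_lt_succ_iff.1 (hm.lt_iff_lt.1 (h'.1.trans h.2)))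

lemma exists_pos_forall_of_eventually_nhdsGT {P : ℝ → Prop} (h : ∀ᶠ ε in 𝓝[>] 0, P ε) :
    ∃ ε₀ > 0, ∀ ε, 0 < ε → ε < ε₀ → P ε := by
  obtain ⟨ε₀, hε₀, hsub⟩ := mem_nhdsGT_iff_exists_Ioo_subset.1 h
  exact ⟨ε₀, hε₀, fun ε h0 h1 => hsub ⟨h0, h1⟩⟩

theorem stmt10 (k : ℕ) (hk : 2 ≤ k) (x : Fin (2*k) → ℝ) (hx : StrictMono x)
    (s : Fin k → ℝ)
    (hs : ∀ j : Fin k,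
      x ⟨2*(j:ℕ), by have := j.isLt; omega⟩ < s j ∧
      s j < x ⟨2*(j:ℕ)+1, by have := j.isLt; omega⟩ ∧
      0 < ff k x (s j)) :
    ∃ ε₀ > (0:ℝ), ∀ ε : ℝ, 0 < ε → ε < ε₀ →
      (∀ j : Fin k,
        (s j, (0:ℝ)) ∈ Omeg k hk x ε ∧ 1/2 < uu k x ε (s j, 0)) ∧
      (∀ j j' : Fin k, j ≠ j' →
        connectedComponentIn {p : ℝ × ℝ | 1/2 < uu k x ε p} (s j, 0) ≠
        connectedComponentIn {p : ℝ × ℝ | 1/2 < uu k x ε p} (s j', 0)) := by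
  obtain ⟨m, hm, hm_neg, hx_mem, hm_pair⟩ := exists_gap_points hx
  set I := Icc (m 0) (m (Fin.last k))
  have hs_gap : ∀ j, s j ∈ Ioo (m j.castSucc) (m j.succ) := fun j =>
    ⟨(hm_pair j).1.trans (hs j).1, (hs j).2.1.trans (hm_pair j).2⟩
  have hgap_sub : ∀ j : Fin k, Icc (m j.castSucc) (m j.succ) ⊆ I := fun j =>
    Icc_subset_Icc (hm.monotone (Fin.zero_le _)) (hm.monotone (Fin.le_last _))
  obtain ⟨δ, hvert, hδ⟩ := ((eventually_all.2 fun i =>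
    eventually_uu_le_half_on_vertical (hm_neg i)).and self_mem_nhdsWithin).exists
  apply exists_pos_forall_of_eventually_nhdsGT
  filter_upwards [eventually_all.2 hvert, nhdsWithin_le_nhds (eventually_uu_pos_on_axis k x _ _),
    nhdsWithin_le_nhds (eventually_uu_lt_half_on_horizontal k x _ _ hδ.ne'),
    self_mem_nhdsWithin] with ε hvert haxis hhor hε
  have hbox : ∀ j, connectedComponentIn {p | 1/2 < uu k x ε p} (s j, 0) ⊆
      Ioo (m j.castSucc) (m j.succ) ×ˢ Ioo (-δ) δ := fun j =>
    connectedComponentIn_subset_rectangle (by rintro t (rfl | rfl) y hy <;> exact hvert _ y hy)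
      (fun t ht y hy => (hhor t (hgap_sub j ht) y hy).le)
      ⟨hs_gap j, by simpa using hδ⟩ (half_lt_uu_axis hε (hs j).2.2)
  refine ⟨fun j => ⟨?_, half_lt_uu_axis hε (hs j).2.2⟩, fun j j' hne heq => hne ?_⟩
  · exact mem_Omeg_of_pos_on_segment hk haxis ⟨(hx_mem _).1.le, (hx_mem _).2.le⟩
      (hgap_sub j (Ioo_subset_Icc_self (hs_gap j)))
  · have hj : (s j, (0:ℝ)) ∈ connectedComponentIn {p | 1/2 < uu k x ε p} (s j', 0) := by
      rw [← heq]
      exact mem_connectedComponentIn (half_lt_uu_axis hε (hs j).2.2)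
    exact hm.eq_of_mem_Ioo_castSucc_succ (hs_gap j) (hbox j' hj).1
end

section
/- There exists ε₀ > 0 such that for every 0 < ε < ε₀ there exist points p and q on the frontier of Ω_ε with N_{u_ε}(p) > 0 and N_{u_ε}(q) < 0; i.e. the oriented curvature of ∂Ω_ε changes sign, being negative at p and positive at q. -/
/-
Write `z = x + iy`. Since `y³ - 3x²y = Re (i z³)`, we have `u_ε = 1/2 - y²/2 + Re G_ε(z)` with the
polynomial `G_ε = iεz³ + ε^{3/2} F`, so all derivatives of `u_ε` are read off from `G_ε'` and `G_ε''`.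
On a fixed disc, the `ε^{3/2} F` terms are `o(ε)`. Along the real segment from `(x₁, 0)` to the
origin `u_ε ≈ 1/2`, so the origin lies in `Ω_ε`; on the imaginary axis
`u_ε(0, y) = 1/2 - y²/2 + εy³ + o(ε)` is negative at `y = ±2`, so the segments from the origin to
`(0, ±2)` meet `∂Ω_ε`, necessarily at zeros of `u_ε` with `y ≈ ±1`. There `u_x = o(ε)`,
`u_y ≈ -y` and `u_xx ≈ -6εy`, so `N ≈ -6εy³` has the sign of `-y`.
-/

open Set Filter Topology

open Polynomial Complex

theorem IsPreconnected.inter_frontier_nonempty {X : Type*} [TopologicalSpace X] {s t : Set X}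
    (hs : IsPreconnected s) (hst : (s ∩ t).Nonempty) (hst' : (s \ t).Nonempty) :
    (s ∩ frontier t).Nonempty := by
  by_contra h
  have hcover : s ⊆ interior t ∪ interior tᶜ := by
    intro p hp
    by_cases hpt : p ∈ interior t
    · exact Or.inl hpt
    · rw [interior_compl]
      exact Or.inr fun hcl => h ⟨p, hp, hcl, hpt⟩
  obtain ⟨q, hq, hqt⟩ := hst
  obtain ⟨q', hq', hq't⟩ := hst'
  obtain ⟨p, -, hpt, hpt'⟩ := hs _ _ isOpen_interior isOpen_interior hcover
    ⟨q, hq, (hcover hq).resolve_right fun h' => interior_subset h' hqt⟩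
    ⟨q', hq', (hcover hq').resolve_left fun h' => hq't (interior_subset h')⟩
  exact interior_subset hpt' (interior_subset hpt)

theorem IsOpen.notMem_of_mem_frontier_connectedComponentIn {X : Type*} [TopologicalSpace X]
    [LocallyConnectedSpace X] {U : Set X} {a p : X} (hU : IsOpen U)
    (hp : p ∈ frontier (connectedComponentIn U a)) : p ∉ U := by
  intro hpU
  obtain ⟨q, hqp, hqa⟩ := mem_closure_iff_nhds.mp (frontier_subset_closure hp) _
    (connectedComponentIn_mem_nhds (hU.mem_nhds hpU))
  have hcomp : connectedComponentIn U p = connectedComponentIn U a :=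
    (connectedComponentIn_eq hqp).trans (connectedComponentIn_eq hqa).symm
  have hpΩ : p ∈ interior (connectedComponentIn U a) := by
    rw [hU.connectedComponentIn.interior_eq, ← hcomp]
    exact mem_connectedComponentIn hpU
  exact hp.2 hpΩ

theorem exists_mem_frontier_connectedComponentIn_of_isPreconnected {X : Type*}
    [TopologicalSpace X] [LocallyConnectedSpace X] {u : X → ℝ} (hu : Continuous u) {a : X}
    {s : Set X} (hs : IsPreconnected s)
    (hsa : (s ∩ connectedComponentIn {x | 0 < u x} a).Nonempty) {q : X} (hqs : q ∈ s)
    (huq : u q ≤ 0) :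
    ∃ p ∈ s, p ∈ frontier (connectedComponentIn {x | 0 < u x} a) ∧ u p = 0 := by
  obtain ⟨p, hps, hp⟩ := hs.inter_frontier_nonempty hsa
    ⟨q, hqs, fun hq => (connectedComponentIn_subset {x | 0 < u x} a hq).not_ge huq⟩
  refine ⟨p, hps, hp, le_antisymm ?_ ?_⟩
  · exact not_lt.mp ((isOpen_lt continuous_const hu).notMem_of_mem_frontier_connectedComponentIn hp)
  · exact closure_lt_subset_le continuous_const hu
      (closure_mono (connectedComponentIn_subset _ _) (frontier_subset_closure hp))

noncomputable def rePoly (Q : ℂ[X]) (p : ℝ × ℝ) : ℝ := (Q.eval (p.1 + p.2 * I)).re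

theorem hasDerivAt_rePoly_fst (Q : ℂ[X]) (p : ℝ × ℝ) :
    HasDerivAt (fun t => rePoly Q (t, p.2)) (rePoly Q.derivative p) p.1 :=
  ((Q.hasDerivAt _).comp_add_const (p.1 : ℂ) (p.2 * I)).real_of_complex

theorem hasDerivAt_rePoly_snd (Q : ℂ[X]) (p : ℝ × ℝ) :
    HasDerivAt (fun t => rePoly Q (p.1, t)) (rePoly (Q.derivative * C I) p) p.2 := by
  have h := (Q.hasDerivAt _).comp (p.2 : ℂ)
    (((hasDerivAt_id (p.2 : ℂ)).mul_const I).const_add (p.1 : ℂ))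
  simpa [rePoly, Function.comp_def] using h.real_of_complex

theorem px_rePoly (Q : ℂ[X]) : px (rePoly Q) = rePoly Q.derivative :=
  funext fun p => (hasDerivAt_rePoly_fst Q p).deriv

theorem py_rePoly (Q : ℂ[X]) : py (rePoly Q) = rePoly (Q.derivative * C I) :=
  funext fun p => (hasDerivAt_rePoly_snd Q p).deriv

theorem px_const_sub_sq_add_rePoly (c : ℝ) (Q : ℂ[X]) :
    px (fun p => c - p.2 ^ 2 / 2 + rePoly Q p) = rePoly Q.derivative := by
  funext p
  exact (deriv_const_add (f := fun t => rePoly Q (t, p.2)) (c - p.2 ^ 2 / 2)).trans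
    (congrFun (px_rePoly Q) p)

theorem py_const_sub_sq_add_rePoly (c : ℝ) (Q : ℂ[X]) :
    py (fun p => c - p.2 ^ 2 / 2 + rePoly Q p) =
      fun p => -p.2 + rePoly (Q.derivative * C I) p := by
  funext p
  have h := ((hasDerivAt_pow 2 p.2).div_const 2).const_sub c
  refine (HasDerivAt.add (f := fun t => c - t ^ 2 / 2) ?_ (hasDerivAt_rePoly_snd Q p)).deriv
  convert h using 1; ring

theorem py_neg_snd_add_rePoly (Q : ℂ[X]) :
    py (fun p => -p.2 + rePoly Q p) = fun p => -1 + rePoly (Q.derivative * C I) p :=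
  funext fun p => ((hasDerivAt_id p.2).neg.add (hasDerivAt_rePoly_snd Q p)).deriv

theorem NN_const_sub_sq_add_rePoly (c : ℝ) (G : ℂ[X]) (p : ℝ × ℝ) :
    NN (fun p => c - p.2 ^ 2 / 2 + rePoly G p) p =
      (G.derivative.derivative.eval (p.1 + p.2 * I)).re
          * (p.2 + (G.derivative.eval (p.1 + p.2 * I)).im) ^ 2
        - 2 * (G.derivative.derivative.eval (p.1 + p.2 * I)).im
          * (G.derivative.eval (p.1 + p.2 * I)).re * (p.2 + (G.derivative.eval (p.1 + p.2 * I)).im)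
        - (1 + (G.derivative.derivative.eval (p.1 + p.2 * I)).re)
          * (G.derivative.eval (p.1 + p.2 * I)).re ^ 2 := by
  rw [NN, px_const_sub_sq_add_rePoly, py_const_sub_sq_add_rePoly, py_neg_snd_add_rePoly,
    px_rePoly, py_rePoly]
  simp [rePoly, derivative_mul]
  ring

noncomputable def cubicPerturbation (P : ℂ[X]) (ε : ℝ) : ℂ[X] :=
  C (ε * I) * X ^ 3 + C ((ε ^ (3 / 2 : ℝ) : ℝ) : ℂ) * P

noncomputable def uPoly (P : ℂ[X]) (ε : ℝ) (p : ℝ × ℝ) : ℝ :=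
  1 / 2 - p.2 ^ 2 / 2 + rePoly (cubicPerturbation P ε) p

theorem uPoly_apply (P : ℂ[X]) (ε : ℝ) (p : ℝ × ℝ) :
    uPoly P ε p = 1 / 2 - p.2 ^ 2 / 2 + ε * (p.2 ^ 3 - 3 * p.1 ^ 2 * p.2)
      + ε ^ (3 / 2 : ℝ) * (P.eval (p.1 + p.2 * I)).re := by
  simp [uPoly, rePoly, cubicPerturbation, pow_succ]
  ring

theorem continuous_uPoly (P : ℂ[X]) (ε : ℝ) : Continuous (uPoly P ε) := by
  unfold uPoly rePoly
  fun_prop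

theorem eval_derivative_cubicPerturbation_mul_I (P : ℂ[X]) (ε y : ℝ) :
    (cubicPerturbation P ε).derivative.eval (y * I)
      = -((3 * ε * y ^ 2 : ℝ) * I) + (ε ^ (3 / 2 : ℝ) : ℝ) * P.derivative.eval (y * I) := by
  simp [cubicPerturbation]
  linear_combination (3 * ε * y ^ 2 * I : ℂ) * I_sq

theorem eval_derivative_derivative_cubicPerturbation_mul_I (P : ℂ[X]) (ε y : ℝ) :
    (cubicPerturbation P ε).derivative.derivative.eval (y * I)
      = -(6 * ε * y : ℝ) + (ε ^ (3 / 2 : ℝ) : ℝ) * P.derivative.derivative.eval (y * I) := by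
  simp [cubicPerturbation]
  linear_combination (6 * ε * y : ℂ) * I_sq

-- `A, B, a, c` stand for `Re G''`, `Im G''`, `Re G'`, `Im G'` at `iy`, so the bracket is `N`
-- (`NN_const_sub_sq_add_rePoly`); its leading term is `-6εy³`, the rest is `O(ε²)`.
theorem mul_NN_expr_neg {ε δ y A B a c : ℝ} (hε : 0 < ε) (hε1 : ε ≤ 1 / 100) (hδ : δ ≤ ε / 10)
    (hy : 1 / 2 ≤ y ^ 2) (hy2 : y ^ 2 ≤ 2) (hA : |A + 6 * ε * y| ≤ δ) (hB : |B| ≤ δ)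
    (ha : |a| ≤ δ) (hc : |c + 3 * ε * y ^ 2| ≤ δ) :
    y * (A * (y + c) ^ 2 - 2 * B * a * (y + c) - (1 + A) * a ^ 2) < 0 := by
  have hδ0 : 0 ≤ δ := (abs_nonneg _).trans hB
  have hy_abs : |y| ≤ 3 / 2 := by nlinarith [sq_abs y, abs_nonneg y]
  have hc_abs : |c| ≤ 7 * ε := by
    have := abs_le.mp hc
    exact abs_le.mpr ⟨by nlinarith, by nlinarith⟩
  have hyA : y * A ≤ -2 * ε := by
    have h := (abs_le.mp ((abs_mul y (A + 6 * ε * y)).trans_le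
      (mul_le_mul hy_abs hA (abs_nonneg _) (by norm_num)))).2
    nlinarith
  have hb2 : 1 / 4 ≤ (y + c) ^ 2 := by
    have h := (abs_le.mp ((abs_mul y c).trans_le
      (mul_le_mul hy_abs hc_abs (abs_nonneg _) (by norm_num)))).1
    nlinarith [sq_nonneg c]
  have hb : |y + c| ≤ 2 := (abs_add_le y c).trans (by linarith)
  have hBa : |B * a| ≤ ε / 1000 := by
    rw [abs_mul]; nlinarith [abs_nonneg a, abs_nonneg B]
  have hmid : |y * (2 * B * a * (y + c))| ≤ ε / 100 := by
    have : y * (2 * B * a * (y + c)) = 2 * (B * a) * (y * (y + c)) := by ring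
    rw [this, abs_mul, abs_mul 2, abs_two, abs_mul y]
    nlinarith [abs_nonneg (B * a), abs_nonneg y, abs_nonneg (y + c),
      mul_le_mul hy_abs hb (abs_nonneg _) (by norm_num)]
  have hlast : |y * ((1 + A) * a ^ 2)| ≤ ε / 100 := by
    have hA' : |1 + A| ≤ 2 := by
      have := abs_le.mp hA
      have := abs_le.mp hy_abs
      rw [abs_le]; constructor <;> nlinarith
    rw [abs_mul, abs_mul, abs_pow]
    have ha2 : |a| ^ 2 ≤ ε / 1000 := by nlinarith [abs_nonneg a]
    nlinarith [abs_nonneg y, abs_nonneg (1 + A), mul_le_mul hy_abs hA' (abs_nonneg _) (by norm_num),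
      sq_nonneg |a|]
  have hmain : y * A * (y + c) ^ 2 ≤ -ε / 2 := by nlinarith
  have := abs_le.mp hmid
  have := abs_le.mp hlast
  nlinarith

theorem eventually_rpow_three_halves_mul_le (C : ℝ) :
    ∀ᶠ ε in 𝓝[>] (0 : ℝ), ε ^ (3 / 2 : ℝ) * C ≤ ε / 10 := by
  have hsqrt : Tendsto (fun ε : ℝ => √ε * C) (𝓝[>] 0) (𝓝 0) := by
    refine ((?_ : Continuous fun ε : ℝ => √ε * C).tendsto' 0 0 (by simp)).mono_left
      nhdsWithin_le_nhds
    fun_prop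
  filter_upwards [hsqrt.eventually (ge_mem_nhds (by norm_num : (0 : ℝ) < 1 / 10)),
    self_mem_nhdsWithin] with ε hC hε
  rw [show (3 / 2 : ℝ) = 1 + 1 / 2 by norm_num, Real.rpow_add hε, Real.rpow_one,
    ← Real.sqrt_eq_rpow, mul_assoc]
  nlinarith [hε.out]

def SmallOnDisc (P : ℂ[X]) (ε R : ℝ) : Prop :=
  ∀ z : ℂ, ‖z‖ ≤ R → ε ^ (3 / 2 : ℝ) * ‖P.eval z‖ ≤ ε / 10 ∧
    ε ^ (3 / 2 : ℝ) * ‖P.derivative.eval z‖ ≤ ε / 10 ∧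
    ε ^ (3 / 2 : ℝ) * ‖P.derivative.derivative.eval z‖ ≤ ε / 10

theorem abs_mul_re_le_mul_norm {e : ℝ} (he : 0 ≤ e) (w : ℂ) : |e * w.re| ≤ e * ‖w‖ := by
  rw [abs_mul, abs_of_nonneg he]
  exact mul_le_mul_of_nonneg_left (abs_re_le_norm w) he

theorem abs_mul_im_le_mul_norm {e : ℝ} (he : 0 ≤ e) (w : ℂ) : |e * w.im| ≤ e * ‖w‖ := by
  rw [abs_mul, abs_of_nonneg he]
  exact mul_le_mul_of_nonneg_left (abs_im_le_norm w) he

theorem Polynomial.eventually_smallOnDisc (P : ℂ[X]) (R : ℝ) :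
    ∀ᶠ ε in 𝓝[>] (0 : ℝ), ε ≤ 1 / 100 ∧ SmallOnDisc P ε R := by
  obtain ⟨M, hM⟩ := (isCompact_closedBall (0 : ℂ) R).exists_bound_of_continuousOn
    (f := fun z => ‖P.eval z‖ + ‖P.derivative.eval z‖ + ‖P.derivative.derivative.eval z‖)
    (by fun_prop)
  filter_upwards [nhdsWithin_le_nhds (ge_mem_nhds (by norm_num : (0 : ℝ) < 1 / 100)),
    eventually_rpow_three_halves_mul_le M, self_mem_nhdsWithin] with ε hε1 hεM hε
  refine ⟨hε1, fun z hz => ?_⟩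
  have hMz := (le_abs_self _).trans (hM z (by simpa using hz))
  have he : 0 ≤ ε ^ (3 / 2 : ℝ) := Real.rpow_nonneg (le_of_lt hε) _
  have hbound : ∀ t ≤ M, ε ^ (3 / 2 : ℝ) * t ≤ ε / 10 :=
    fun t ht => (mul_le_mul_of_nonneg_left ht he).trans hεM
  refine ⟨hbound _ ?_, hbound _ ?_, hbound _ ?_⟩ <;>
    linarith [norm_nonneg (P.eval z), norm_nonneg (P.derivative.eval z),
      norm_nonneg (P.derivative.derivative.eval z)]

section SmallPerturbation
variable {P : ℂ[X]} {ε R : ℝ}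

theorem zero_mem_connectedComponentIn_uPoly (hε : 0 < ε) (hε1 : ε ≤ 1 / 100)
    (hP : SmallOnDisc P ε R) {a : ℝ} (ha : |a| ≤ R) :
    ((0 : ℝ), (0 : ℝ)) ∈ connectedComponentIn {p | 0 < uPoly P ε p} (a, 0) := by
  have hseg : Set.uIcc a 0 ×ˢ {(0 : ℝ)} ⊆ {p | 0 < uPoly P ε p} := by
    rintro ⟨t, s⟩ ⟨ht : t ∈ Set.uIcc a 0, rfl⟩
    have htR : ‖(t : ℂ)‖ ≤ R := by
      rw [norm_real, Real.norm_eq_abs]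
      simpa using (Set.abs_sub_right_of_mem_uIcc ht).trans (by simpa using ha)
    have hv := abs_le.mp ((abs_mul_re_le_mul_norm (Real.rpow_nonneg hε.le _) _).trans (hP _ htR).1)
    show 0 < uPoly P ε (t, 0)
    simp only [uPoly_apply, ofReal_zero, zero_mul, add_zero]
    nlinarith
  exact (isPreconnected_uIcc.prod isPreconnected_singleton).subset_connectedComponentIn
    ⟨left_mem_uIcc, rfl⟩ hseg ⟨right_mem_uIcc, rfl⟩

theorem uPoly_axis_neg (hε : 0 < ε) (hε1 : ε ≤ 1 / 100) (hP : SmallOnDisc P ε R) (hR : 2 ≤ R)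
    {y : ℝ} (hy : |y| = 2) : uPoly P ε (0, y) < 0 := by
  have hyR : ‖(y : ℂ) * I‖ ≤ R := by simpa [hy] using hR
  have hv := abs_le.mp ((abs_mul_re_le_mul_norm (Real.rpow_nonneg hε.le _) _).trans (hP _ hyR).1)
  have hy2 : y ^ 2 = 4 := by rw [← sq_abs, hy]; norm_num
  have hy3 : y ^ 3 = 4 * y := by rw [pow_succ, hy2, mul_comm]
  have hy_le : y ≤ 2 := hy ▸ le_abs_self y
  simp only [uPoly_apply, ofReal_zero, zero_add, hy2, hy3]
  nlinarith

theorem sq_bounds_of_uPoly_axis_eq_zero (hε : 0 < ε) (hε1 : ε ≤ 1 / 100) (hP : SmallOnDisc P ε R)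
    (hR : 2 ≤ R) {y : ℝ} (hy : |y| ≤ 2) (hu : uPoly P ε (0, y) = 0) :
    1 / 2 ≤ y ^ 2 ∧ y ^ 2 ≤ 2 := by
  have hyR : ‖(y : ℂ) * I‖ ≤ R := by simpa using hy.trans hR
  have hv := abs_le.mp ((abs_mul_re_le_mul_norm (Real.rpow_nonneg hε.le _) _).trans (hP _ hyR).1)
  have hy3 := abs_le.mp (show |y ^ 3| ≤ 8 by
    rw [abs_pow]; exact (pow_le_pow_left₀ (abs_nonneg y) hy 3).trans (by norm_num))
  simp only [uPoly_apply, ofReal_zero, zero_add] at hu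
  constructor <;> nlinarith

theorem mul_NN_uPoly_axis_neg (hε : 0 < ε) (hε1 : ε ≤ 1 / 100) (hP : SmallOnDisc P ε R)
    (hR : 2 ≤ R) {y : ℝ} (hy : |y| ≤ 2) (hu : uPoly P ε (0, y) = 0) :
    y * NN (uPoly P ε) (0, y) < 0 := by
  have hyR : ‖(y : ℂ) * I‖ ≤ R := by simpa using hy.trans hR
  have he : 0 ≤ ε ^ (3 / 2 : ℝ) := Real.rpow_nonneg hε.le _
  obtain ⟨-, h1, h2⟩ := hP _ hyR
  obtain ⟨hy1, hy2⟩ := sq_bounds_of_uPoly_axis_eq_zero hε hε1 hP hR hy hu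
  rw [show uPoly P ε = fun p => 1 / 2 - p.2 ^ 2 / 2 + rePoly (cubicPerturbation P ε) p from rfl,
    NN_const_sub_sq_add_rePoly]
  simp only [ofReal_zero, zero_add, eval_derivative_cubicPerturbation_mul_I,
    eval_derivative_derivative_cubicPerturbation_mul_I, add_re, add_im, neg_re, neg_im, re_ofReal_mul,
    im_ofReal_mul, ofReal_re, ofReal_im, I_re, I_im, mul_zero, mul_one, neg_zero, zero_add]
  refine mul_NN_expr_neg hε hε1 le_rfl hy1 hy2 ?_ ((abs_mul_im_le_mul_norm he _).trans h2)
    ((abs_mul_re_le_mul_norm he _).trans h1) ?_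
  · simpa using (abs_mul_re_le_mul_norm he _).trans h2
  · simpa using (abs_mul_im_le_mul_norm he _).trans h1

theorem exists_mem_frontier_uPoly_axis (hε : 0 < ε) (hε1 : ε ≤ 1 / 100) (hP : SmallOnDisc P ε R)
    (hR : 2 ≤ R) {a : ℝ} (ha : |a| ≤ R) {y₀ : ℝ} (hy₀ : |y₀| = 2) :
    ∃ y ∈ Set.uIcc 0 y₀, ((0 : ℝ), y) ∈ frontier (connectedComponentIn {p | 0 < uPoly P ε p} (a, 0))
      ∧ y * NN (uPoly P ε) (0, y) < 0 := by
  have hseg : IsPreconnected ({(0 : ℝ)} ×ˢ Set.uIcc 0 y₀) :=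
    isPreconnected_singleton.prod isPreconnected_uIcc
  obtain ⟨⟨_, y⟩, ⟨rfl, hy⟩, hfr, hu⟩ := exists_mem_frontier_connectedComponentIn_of_isPreconnected
    (continuous_uPoly P ε) hseg
    ⟨(0, 0), ⟨rfl, left_mem_uIcc⟩, zero_mem_connectedComponentIn_uPoly hε hε1 hP ha⟩
    (q := (0, y₀)) ⟨rfl, right_mem_uIcc⟩ (uPoly_axis_neg hε hε1 hP hR hy₀).le
  have hy2 : |y| ≤ 2 := by simpa [hy₀] using Set.abs_sub_left_of_mem_uIcc hy
  exact ⟨y, hy, hfr, mul_NN_uPoly_axis_neg hε hε1 hP hR hy2 hu⟩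

end SmallPerturbation

noncomputable def FFpoly (k : ℕ) (x : Fin (2 * k) → ℝ) : ℂ[X] := -∏ i, (X - C (x i : ℂ))

theorem uu_eq_uPoly (k : ℕ) (x : Fin (2 * k) → ℝ) (ε : ℝ) : uu k x ε = uPoly (FFpoly k x) ε := by
  funext p
  simp [uu, vv, FF, FFpoly, uPoly_apply, eval_prod]

theorem stmt16_general (k : ℕ) (hk : 2 ≤ k) (x : Fin (2*k) → ℝ) :
    ∃ ε₀ > (0:ℝ), ∀ ε : ℝ, 0 < ε → ε < ε₀ →
      ∃ p ∈ frontier (Omeg k hk x ε), ∃ q ∈ frontier (Omeg k hk x ε),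
        0 < NN (uu k x ε) p ∧ NN (uu k x ε) q < 0 := by
  set a := x ⟨0, by omega⟩
  have hR : 2 ≤ |a| + 2 := le_add_of_nonneg_left (abs_nonneg a)
  obtain ⟨ε₀, hε₀, hsmall⟩ := mem_nhdsGT_iff_exists_Ioo_subset.mp
    ((FFpoly k x).eventually_smallOnDisc (|a| + 2))
  refine ⟨ε₀, hε₀, fun ε hε hεε₀ => ?_⟩
  obtain ⟨hε1, hP⟩ := hsmall ⟨hε, hεε₀⟩
  have ha : |a| ≤ |a| + 2 := le_add_of_nonneg_right zero_le_two
  obtain ⟨yp, hyp, hp, hNp⟩ := exists_mem_frontier_uPoly_axis hε hε1 hP hR ha (y₀ := -2) (by norm_num)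
  obtain ⟨yq, hyq, hq, hNq⟩ := exists_mem_frontier_uPoly_axis hε hε1 hP hR ha (y₀ := 2) (by norm_num)
  rw [Omeg, uu_eq_uPoly]
  exact ⟨_, hp, _, hq, pos_of_mul_neg_right hNp (by simpa using hyp.2),
    neg_of_mul_neg_right hNq (by simpa using hyq.1)⟩

theorem stmt16 (k : ℕ) (hk : 2 ≤ k) (x : Fin (2*k) → ℝ) (hx : StrictMono x)
    (h : ℝ) (hh : h ∈ Set.Ioo (0:ℝ) 1) :
    ∃ ε₀ > (0:ℝ), ∀ ε : ℝ, 0 < ε → ε < ε₀ →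
      ∃ p ∈ frontier (Omeg k hk x ε), ∃ q ∈ frontier (Omeg k hk x ε),
        0 < NN (uu k x ε) p ∧ NN (uu k x ε) q < 0 :=
  stmt16_general k hk x
end
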